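/- Mutual-intersection removal (Appendix Lemma): Let G be an acyclic mixed graph and E = {(x₁,y),…,(x_k,y)}. There exists a GIS-witness for E with all paths half-treks if and only if there exists such a witness (z₁,W₁,p₁),…,(z_k,W_k,p_k) additionally satisfying: for all i,j, if z_j lies on path p_i then z_i does not lie on path p_j. -/

import Mathlib

open scoped Classical Matrix

namespace SEMPaper

/-- The kind of a step along a path in a mixed graph, relative to the direction of travel:
a forward directed edge, a backward directed edge, or a bidirected edge. -/
inductive EKind : Type
  | fwd | bwd | bi
deriving DecidableEq

/-- An acyclic mixed graph: directed edges `dir`, bidirected edges `bi` (symmetric), with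
acyclic directed part. -/
structure MixedGraph (V : Type) where
  dir : V → V → Prop
  bi : V → V → Prop
  bi_symm : ∀ {i j}, bi i j → bi j i
  acyclic : Irreflexive (Relation.TransGen dir)

namespace MixedGraph

variable {V : Type} (G : MixedGraph V)

/-- `v` is a descendant of `u`: reachable from `u` by a directed path (including `u` itself). -/
def desc (u v : V) : Prop := Relation.ReflTransGen G.dir u v

/-- `G_{E−}`: the graph `G` with the directed edges in `E` deleted. -/
def deleteDir (E : Set (V × V)) : MixedGraph V where
  dir i j := G.dir i j ∧ (i, j) ∉ E
  bi := G.bi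
  bi_symm h := G.bi_symm h
  acyclic v h := G.acyclic v (by
    have key : ∀ a b, Relation.TransGen (fun i j => G.dir i j ∧ (i, j) ∉ E) a b →
        Relation.TransGen G.dir a b := by
      intro a b hh
      induction hh with
      | single hab => exact Relation.TransGen.single hab.1
      | tail _ hab ih => exact Relation.TransGen.tail ih hab.1
    exact key v v h)

/-- Validity of a single step from `a` to `b` of kind `k`. -/
def stepOK (a b : V) : EKind → Prop
  | .fwd => G.dir a b
  | .bwd => G.dir b a
  | .bi => G.bi a b

end MixedGraph

/-- Walks in a mixed graph: sequences of consecutive steps along directed edges (in either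
direction) or bidirected edges. -/
inductive Walk {V : Type} (G : MixedGraph V) : V → V → Type
  | nil (v : V) : Walk G v v
  | cons {a b c : V} (k : EKind) (h : G.stepOK a b k) (w : Walk G b c) : Walk G a c

namespace Walk

variable {V : Type} {G : MixedGraph V}

/-- The list of vertices visited by a walk. -/
def support : ∀ {x y : V}, Walk G x y → List V
  | _, _, .nil v => [v]
  | x, _, .cons _ _ w => x :: w.support

/-- The list of steps of a walk: (source, target, kind). -/
def darts : ∀ {x y : V}, Walk G x y → List (V × V × EKind)
  | _, _, .nil _ => []
  | _, _, @Walk.cons _ _ x b _ k _ w => (x, b, k) :: w.darts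

/-- A path is a walk visiting distinct vertices. -/
def IsPath {x y : V} (w : Walk G x y) : Prop := w.support.Nodup

/-- A vertex with incoming step of kind `kin` and outgoing step of kind `kout` is a collider
iff both adjacent edges point into it. -/
def isColl : EKind → EKind → Bool
  | .fwd, .bwd => true
  | .fwd, .bi => true
  | .bi, .bwd => true
  | .bi, .bi => true
  | _, _ => false

/-- Auxiliary predicate: the walk, whose first vertex was entered via a step of kind `kin`,
is unblocked given `W` (each internal vertex: colliders are in `W` or have a descendant
in `W`; non-colliders are outside `W`). -/
def UnblockedFrom (W : Set V) : ∀ {x y : V}, EKind → Walk G x y → Prop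
  | _, _, _, .nil _ => True
  | x, _, kin, .cons k _ w =>
      (if isColl kin k then ∃ d ∈ W, G.desc x d else x ∉ W) ∧ UnblockedFrom W k w

/-- The walk is unblocked given `W`. -/
def Unblocked (W : Set V) : ∀ {x y : V}, Walk G x y → Prop
  | _, _, .nil _ => True
  | _, _, .cons k _ w => UnblockedFrom W k w

/-- `Left(π)`: the start vertex of `π` together with every vertex with a directed edge of `π`
leaving it in the direction of the start. -/
def Left {x y : V} (w : Walk G x y) : Set V :=
  insert x {v | ∃ a, (a, v, EKind.bwd) ∈ w.darts}

/-- `Right(π)`: the end vertex of `π` together with every vertex with a directed edge of `π`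
leaving it in the direction of the end. -/
def Right {x y : V} (w : Walk G x y) : Set V :=
  insert y {v | ∃ b, (v, b, EKind.fwd) ∈ w.darts}

/-- The walk traverses the directed edge `a → b` (in either direction of travel). -/
def UsesDirEdge {x y : V} (w : Walk G x y) (a b : V) : Prop :=
  (a, b, EKind.fwd) ∈ w.darts ∨ (b, a, EKind.bwd) ∈ w.darts

/-- The directed edges traversed by the walk. -/
def dirEdges {x y : V} (w : Walk G x y) : Set (V × V) :=
  {e | (e.1, e.2, EKind.fwd) ∈ w.darts ∨ (e.2, e.1, EKind.bwd) ∈ w.darts}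

/-- The bidirected edges traversed by the walk (up to orientation). -/
def biEdges {x y : V} (w : Walk G x y) : Set (V × V) :=
  {e | (e.1, e.2, EKind.bi) ∈ w.darts ∨ (e.2, e.1, EKind.bi) ∈ w.darts}

/-- A half-trek from the start vertex: a directed path, optionally preceded by a single
initial bidirected edge. -/
def IsHalfTrek : ∀ {x y : V}, Walk G x y → Prop
  | _, _, .nil _ => True
  | _, _, .cons k _ w => k ≠ EKind.bwd ∧ ∀ d ∈ w.darts, d.2.2 = EKind.fwd

/-- The subpath of `w` from `v` to the end points into `v` (the edge of `w` adjacent to `v` on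
the end-side has its arrowhead at `v`). -/
def pointsBackAt {x y : V} (w : Walk G x y) (v : V) : Prop :=
  ∃ b k, (v, b, k) ∈ w.darts ∧ k ≠ EKind.fwd

/-- The subpath of `w` from the start to `v` points into `v` (the edge of `w` adjacent to `v`
on the start-side has its arrowhead at `v`). -/
def pointsForwardAt {x y : V} (w : Walk G x y) (v : V) : Prop :=
  ∃ a k, (a, v, k) ∈ w.darts ∧ k ≠ EKind.bwd

end Walk

/-- d-separation: `x` and `y` are d-separated given `W` in `G` if no path between them is
unblocked given `W`. -/
def MixedGraph.dsep {V : Type} (G : MixedGraph V) (x y : V) (W : Set V) : Prop :=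
  ∀ w : Walk G x y, w.IsPath → ¬ w.Unblocked W


/-- A GIS-witness for `E = {(x i, y)}`: for each `i`, `W_i` contains no descendants of `y`
and `z_i ⫫ y` given `W_i` in `G_{E−}`; `p_i` is a path between `z_i` and `x_i` unblocked
given `W_i`; and the paths have no sided intersection. -/
def GISWitness {V : Type} (G : MixedGraph V) {k : ℕ} (x : Fin k → V) (y : V)
    (z : Fin k → V) (Wc : Fin k → Set V) (p : ∀ i, Walk G (z i) (x i)) : Prop :=
  (∀ i, (∀ w ∈ Wc i, ¬ G.desc y w) ∧
    (G.deleteDir {e | ∃ j, e = (x j, y)}).dsep (z i) y (Wc i)) ∧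
  (∀ i, (p i).IsPath ∧ (p i).Unblocked (Wc i)) ∧
  (∀ i j, i ≠ j → (p i).Left ∩ (p j).Left = ∅ ∧ (p i).Right ∩ (p j).Right = ∅)


/-! If `z_j` lies on `p_i` and `z_i` on `p_j`, replace `p_i` by its suffix from `z_j` and `p_j`
by its suffix from `z_i`, swapping the two sources. Suffixes of half-treks past the first
vertex are directed paths, so their `Right` sets only shrink, and their `Left` sets are the
(still distinct) sources. The total length of the paths drops, so repeating this terminates.

The substance is a separator for the new source `z_j` that leaves the suffix unblocked. If
`W_i` does not d-separate `z_j` from `y`, then prepending the part of `p_i` before `z_j` shows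
that `z_j` has no descendant in `W_i` and that `y` is not a descendant of `z_j` (otherwise `z_i`
would be d-connected to `y`). In that case `W_j` minus the descendants of `z_j` still separates
`z_j` from `y`, and it misses the suffix, which consists of descendants of `z_j`. -/
namespace Walk

variable {V : Type} {G : MixedGraph V}

def append : ∀ {a b c : V}, Walk G a b → Walk G b c → Walk G a c
  | _, _, _, .nil _, w₂ => w₂
  | _, _, _, .cons k h w, w₂ => .cons k h (append w w₂)

def endKind : ∀ {a b : V}, EKind → Walk G a b → EKind
  | _, _, κ, .nil _ => κ
  | _, _, _, .cons k _ w => endKind k w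

def IsDirected {a b : V} (w : Walk G a b) : Prop := ∀ d ∈ w.darts, d.2.2 = EKind.fwd

section Basic

variable {a b c : V}

@[simp] lemma nil_append (w : Walk G a b) : (nil a).append w = w := rfl

@[simp] lemma cons_append {d : V} (k : EKind) (h : G.stepOK a b k) (w : Walk G b c)
    (w₂ : Walk G c d) : (cons k h w).append w₂ = cons k h (w.append w₂) := rfl

@[simp] lemma darts_nil : (nil a : Walk G a a).darts = [] := rfl

@[simp] lemma darts_cons (k : EKind) (h : G.stepOK a b k) (w : Walk G b c) :
    (cons k h w).darts = (a, b, k) :: w.darts := rfl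

@[simp] lemma support_nil : (nil a : Walk G a a).support = [a] := rfl

@[simp] lemma support_cons (k : EKind) (h : G.stepOK a b k) (w : Walk G b c) :
    (cons k h w).support = a :: w.support := rfl

@[simp] lemma endKind_nil (κ : EKind) : (nil a : Walk G a a).endKind κ = κ := rfl

@[simp] lemma endKind_cons (κ k : EKind) (h : G.stepOK a b k) (w : Walk G b c) :
    (cons k h w).endKind κ = w.endKind k := rfl

@[simp] lemma darts_append (w₁ : Walk G a b) (w₂ : Walk G b c) :
    (w₁.append w₂).darts = w₁.darts ++ w₂.darts := by
  induction w₁ <;> simp [*]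

lemma start_mem_support (w : Walk G a b) : a ∈ w.support := by
  cases w <;> simp

lemma fst_mem_support_of_mem_darts {w : Walk G a b} {d : V × V × EKind} (hd : d ∈ w.darts) :
    d.1 ∈ w.support := by
  induction w with
  | nil => simp at hd
  | cons k h w ih =>
    rcases List.mem_cons.1 hd with rfl | hd
    · simp
    · exact List.mem_cons_of_mem _ (ih hd)

lemma mem_support_append {w₁ : Walk G a b} {w₂ : Walk G b c} {v : V} :
    v ∈ (w₁.append w₂).support ↔ v ∈ w₁.support ∨ v ∈ w₂.support := by
  induction w₁ with
  | nil => simpa using fun h => h ▸ start_mem_support w₂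
  | cons k h w ih => simp [ih, or_assoc]

lemma support_suffix_append (w₁ : Walk G a b) (w₂ : Walk G b c) :
    w₂.support <:+ (w₁.append w₂).support := by
  induction w₁ with
  | nil => exact List.suffix_refl _
  | cons k h w ih => exact (ih w₂).trans (List.suffix_cons _ _)

lemma IsPath.of_append_right {w₁ : Walk G a b} {w₂ : Walk G b c}
    (h : (w₁.append w₂).IsPath) : w₂.IsPath :=
  List.Nodup.sublist (support_suffix_append w₁ w₂).sublist h

lemma exists_eq_append_of_mem_support {v : V} {w : Walk G a b} (hv : v ∈ w.support) :
    ∃ (w₁ : Walk G a v) (w₂ : Walk G v b), w = w₁.append w₂ := by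
  induction w with
  | nil =>
    obtain rfl := List.mem_singleton.1 hv
    exact ⟨nil v, nil v, rfl⟩
  | cons k h w ih =>
    rcases List.mem_cons.1 hv with rfl | hv
    · exact ⟨nil v, cons k h w, rfl⟩
    · obtain ⟨w₁, w₂, rfl⟩ := ih hv
      exact ⟨cons k h w₁, w₂, rfl⟩

lemma exists_eq_append_cons_append (w : Walk G a b) (hw : ¬ w.IsPath) :
    ∃ (v c : V) (u₁ : Walk G a v) (k : EKind) (h : G.stepOK v c k) (r : Walk G c v)
      (u₃ : Walk G v b), w = u₁.append ((cons k h r).append u₃) := by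
  induction w with
  | nil => exact absurd (List.nodup_singleton _) hw
  | cons k h w ih =>
    rw [IsPath, support_cons, List.nodup_cons, not_and_or, not_not] at hw
    rcases hw with hmem | hw
    · obtain ⟨r, u₃, rfl⟩ := exists_eq_append_of_mem_support hmem
      exact ⟨_, _, nil _, k, h, r, u₃, rfl⟩
    · obtain ⟨v, c, u₁, k', h', r, u₃, rfl⟩ := ih hw
      exact ⟨v, c, cons k h u₁, k', h', r, u₃, rfl⟩

end Basic

section Unblocked

variable {W : Set V} {a b c : V}

@[simp] lemma unblockedFrom_nil (κ : EKind) : (nil a : Walk G a a).UnblockedFrom W κ := trivial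

lemma unblockedFrom_cons (κ k : EKind) (h : G.stepOK a b k) (w : Walk G b c) :
    (cons k h w).UnblockedFrom W κ ↔
      (if isColl κ k then ∃ d ∈ W, G.desc a d else a ∉ W) ∧ w.UnblockedFrom W k :=
  Iff.rfl

@[simp] lemma unblocked_nil : (nil a : Walk G a a).Unblocked W := trivial

lemma unblocked_cons (k : EKind) (h : G.stepOK a b k) (w : Walk G b c) :
    (cons k h w).Unblocked W ↔ w.UnblockedFrom W k :=
  Iff.rfl

lemma unblockedFrom_append (κ : EKind) (w₁ : Walk G a b) (w₂ : Walk G b c) :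
    (w₁.append w₂).UnblockedFrom W κ ↔
      w₁.UnblockedFrom W κ ∧ w₂.UnblockedFrom W (w₁.endKind κ) := by
  induction w₁ generalizing κ with
  | nil => simp
  | cons k h w ih => simp only [cons_append, unblockedFrom_cons, ih, endKind_cons, and_assoc]

lemma Unblocked.of_unblockedFrom {κ : EKind} {w : Walk G a b} (h : w.UnblockedFrom W κ) :
    w.Unblocked W := by
  cases w with
  | nil => trivial
  | cons k hk w => exact h.2

lemma Unblocked.of_append_left {w₁ : Walk G a b} {w₂ : Walk G b c}
    (hw : (w₁.append w₂).Unblocked W) : w₁.Unblocked W := by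
  cases w₁ with
  | nil => trivial
  | cons k h w => exact ((unblockedFrom_append k w w₂).1 hw).1

lemma isColl_eq_of_ne_bwd {κ κ' : EKind} (hκ : κ ≠ .bwd) (hκ' : κ' ≠ .bwd) (k : EKind) :
    isColl κ k = isColl κ' k := by
  cases κ <;> cases κ' <;> cases k <;> simp_all [isColl]

/-- Whether a vertex is a collider depends on the entering step only through whether it has
an arrowhead there, i.e. is not `bwd`. -/
lemma unblockedFrom_congr {κ κ' : EKind} (hκ : κ ≠ .bwd) (hκ' : κ' ≠ .bwd)
    (w : Walk G a b) :
    w.UnblockedFrom W κ ↔ w.UnblockedFrom W κ' := by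
  cases w with
  | nil => simp
  | cons k h w => simp only [unblockedFrom_cons, isColl_eq_of_ne_bwd hκ hκ' k]

/-- Following forward steps from `a`, the walk must hit a collider before a backward step;
that collider is a descendant of `a`. -/
lemma UnblockedFrom.exists_desc_of_endKind_eq_bwd {w : Walk G a b}
    (hw : w.UnblockedFrom W .fwd) (hend : w.endKind .fwd = .bwd) : ∃ d ∈ W, G.desc a d := by
  induction w with
  | nil => simp at hend
  | cons k h w ih =>
    rw [unblockedFrom_cons] at hw
    cases k with
    | fwd =>
      obtain ⟨d, hd, had⟩ := ih hw.2 hend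
      exact ⟨d, hd, Relation.ReflTransGen.head h had⟩
    | bwd | bi => simpa [isColl] using hw.1

/-- The condition at the vertex where a closed subwalk is cut out: `e`, `k₂` are the steps
around its first visit, `e₂`, `k₃` around its last. -/
lemma ite_isColl_splice {P Q : Prop} {e k₂ e₂ k₃ : EKind}
    (h₁ : if isColl e k₂ then P else Q) (h₂ : if isColl e₂ k₃ then P else Q)
    (h₃ : k₂ = .fwd → e₂ = .bwd → P) : if isColl e k₃ then P else Q := by
  cases e <;> cases k₂ <;> cases e₂ <;> cases k₃ <;> simp_all [isColl]

lemma Unblocked.splice {v c : V} {u₁ : Walk G a v} {k : EKind} {h : G.stepOK v c k}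
    {r : Walk G c v} {u₃ : Walk G v b}
    (hw : (u₁.append ((cons k h r).append u₃)).Unblocked W) :
    (u₁.append u₃).Unblocked W := by
  cases u₁ with
  | nil =>
    rw [nil_append, cons_append, unblocked_cons, unblockedFrom_append] at hw
    exact .of_unblockedFrom hw.2
  | cons κ h₀ u₁ =>
    simp only [cons_append, unblocked_cons, unblockedFrom_append, unblockedFrom_cons] at hw ⊢
    obtain ⟨hu₁, hv, hr, hu₃⟩ := hw
    refine ⟨hu₁, ?_⟩
    cases u₃ with
    | nil => trivial
    | cons k₃ h₃ u₃ =>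
      refine ⟨ite_isColl_splice hv hu₃.1 fun hk hend => ?_, hu₃.2⟩
      subst hk
      obtain ⟨d, hd, hcd⟩ := hr.exists_desc_of_endKind_eq_bwd hend
      exact ⟨d, hd, Relation.ReflTransGen.head h hcd⟩

lemma Unblocked.exists_isPath {w : Walk G a b} (hw : w.Unblocked W) :
    ∃ w' : Walk G a b, w'.IsPath ∧ w'.Unblocked W := by
  induction hn : w.darts.length using Nat.strong_induction_on generalizing w with
  | _ n ih =>
    by_cases hp : w.IsPath
    · exact ⟨w, hp, hw⟩
    obtain ⟨v, c, u₁, k, h, r, u₃, rfl⟩ := exists_eq_append_cons_append w hp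
    exact ih _ (by simp [← hn]) hw.splice rfl

end Unblocked

section Directed

variable {W : Set V} {a b c : V}

lemma isDirected_cons {k : EKind} {h : G.stepOK a b k} {w : Walk G b c} :
    (cons k h w).IsDirected ↔ k = .fwd ∧ w.IsDirected := by
  simp [IsDirected]

lemma IsDirected.unblockedFrom_iff {w : Walk G a b} (hw : w.IsDirected) (κ : EKind) :
    w.UnblockedFrom W κ ↔ ∀ d ∈ w.darts, d.1 ∉ W := by
  induction w generalizing κ with
  | nil => simp
  | cons k h w ih =>
    obtain ⟨rfl, hw'⟩ := isDirected_cons.1 hw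
    cases κ <;> simp [unblockedFrom_cons, isColl, ih hw']

lemma IsDirected.desc_of_mem {w : Walk G a b} (hw : w.IsDirected) {v : V}
    (hv : v ∈ w.support) : G.desc a v := by
  induction w with
  | nil => exact (List.mem_singleton.1 hv) ▸ Relation.ReflTransGen.refl
  | cons k h w ih =>
    obtain ⟨rfl, hw'⟩ := isDirected_cons.1 hw
    rcases List.mem_cons.1 hv with rfl | hv
    · exact .refl
    · exact .head h (ih hw' hv)

lemma IsDirected.desc_to_end {w : Walk G a b} (hw : w.IsDirected) {v : V}
    (hv : v ∈ w.support) : G.desc v b := by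
  induction w generalizing v with
  | nil => exact (List.mem_singleton.1 hv) ▸ Relation.ReflTransGen.refl
  | cons k h w ih =>
    obtain ⟨rfl, hw'⟩ := isDirected_cons.1 hw
    rcases List.mem_cons.1 hv with rfl | hv
    · exact .head h (ih hw' (start_mem_support w))
    · exact ih hw' hv

lemma IsDirected.endKind_ne_bwd {κ : EKind} (hκ : κ ≠ .bwd) {w : Walk G a b}
    (hw : w.IsDirected) : w.endKind κ ≠ .bwd := by
  induction w generalizing κ with
  | nil => exact hκ
  | cons k h w ih =>
    obtain ⟨rfl, hw'⟩ := isDirected_cons.1 hw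
    exact ih (by decide) hw'

lemma exists_isDirected_of_desc (h : G.desc a b) : ∃ w : Walk G a b, w.IsDirected := by
  induction h using Relation.ReflTransGen.head_induction_on with
  | refl => exact ⟨nil _, by simp [IsDirected]⟩
  | head hab _ ih =>
    obtain ⟨w, hw⟩ := ih
    exact ⟨cons .fwd hab w, isDirected_cons.2 ⟨rfl, hw⟩⟩

end Directed

section HalfTrek

variable {W : Set V} {a b c : V}

lemma isHalfTrek_iff {w : Walk G a b} :
    w.IsHalfTrek ↔
      (∀ d ∈ w.darts.head?, d.2.2 ≠ .bwd) ∧ ∀ d ∈ w.darts.tail, d.2.2 = .fwd := by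
  cases w <;> simp [IsHalfTrek]

lemma IsHalfTrek.of_darts_eq {G' : MixedGraph V} {w : Walk G a b} {w' : Walk G' a b}
    (hw : w.IsHalfTrek) (hd : w'.darts = w.darts) : w'.IsHalfTrek :=
  isHalfTrek_iff.2 (hd ▸ isHalfTrek_iff.1 hw)

lemma IsDirected.isHalfTrek {w : Walk G a b} (hw : w.IsDirected) : w.IsHalfTrek :=
  isHalfTrek_iff.2 ⟨fun d hd => by simp [hw d (List.mem_of_mem_head? hd)],
    fun d hd => hw d (List.mem_of_mem_tail hd)⟩

/-- A half-trek has no colliders. -/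
lemma IsHalfTrek.unblocked_iff {w : Walk G a b} (hw : w.IsHalfTrek) :
    w.Unblocked W ↔ ∀ d ∈ w.darts.tail, d.1 ∉ W := by
  cases w with
  | nil => simp
  | cons k h w => exact IsDirected.unblockedFrom_iff hw.2 k

lemma darts_tail_append {w₁ : Walk G a b} (w₂ : Walk G b c) (hab : a ≠ b) :
    (w₁.append w₂).darts.tail = w₁.darts.tail ++ w₂.darts := by
  cases w₁ with
  | nil => exact absurd rfl hab
  | cons k h w => simp

lemma IsHalfTrek.isDirected_of_append {w₁ : Walk G a b} {w₂ : Walk G b c}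
    (hw : (w₁.append w₂).IsHalfTrek) (hab : a ≠ b) : w₂.IsDirected := fun d hd =>
  (isHalfTrek_iff.1 hw).2 d (by rw [darts_tail_append w₂ hab]; exact List.mem_append_right _ hd)

lemma IsHalfTrek.of_append_left {w₁ : Walk G a b} {w₂ : Walk G b c}
    (hw : (w₁.append w₂).IsHalfTrek) : w₁.IsHalfTrek := by
  cases w₁ with
  | nil => trivial
  | cons k h w => exact ⟨hw.1, fun d hd => hw.2 d (by simp [hd])⟩

lemma IsHalfTrek.not_mem_support {y : V} {w : Walk G a b} (hw : w.IsHalfTrek)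
    (hby : G.dir b y) (hay : a ≠ y) : y ∉ w.support := by
  cases w with
  | nil => simpa using hay.symm
  | cons k h w =>
    rintro (_ | ⟨_, hy⟩)
    · exact hay rfl
    · exact G.acyclic y (.tail' (IsDirected.desc_to_end hw.2 hy) hby)

/-- `q.UnblockedFrom W .fwd`: `q` is unblocked when entered through an arrowhead at its start. -/
lemma Unblocked.append_of_isHalfTrek {R : Walk G a b} {q : Walk G b c} (hR : R.IsHalfTrek)
    (hRu : R.Unblocked W) (hq : q.UnblockedFrom W .fwd) : (R.append q).Unblocked W := by
  cases R with
  | nil => exact .of_unblockedFrom hq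
  | cons k h R =>
    refine (unblockedFrom_append k R q).2 ⟨hRu, ?_⟩
    exact (unblockedFrom_congr (IsDirected.endKind_ne_bwd hR.1 hR.2) (by decide) q).2 hq

lemma IsHalfTrek.Left_eq {w : Walk G a b} (hw : w.IsHalfTrek) : w.Left = {a} := by
  refine Set.eq_singleton_iff_unique_mem.2 ⟨Set.mem_insert a _, ?_⟩
  rintro v (rfl | ⟨u, hu⟩)
  · rfl
  · cases w with
    | nil => simp at hu
    | cons k h w =>
      rcases List.mem_cons.1 hu with hu | hu
      · exact absurd (congrArg (·.2.2) hu).symm hw.1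
      · exact nomatch hw.2 _ hu

lemma Right_subset_Right_append (w₁ : Walk G a b) (w₂ : Walk G b c) :
    w₂.Right ⊆ (w₁.append w₂).Right := by
  rintro v (rfl | ⟨u, hu⟩)
  · exact Set.mem_insert _ _
  · exact Or.inr ⟨u, by simp [hu]⟩

lemma exists_deleteDir_darts_eq {E : Set (V × V)} {y : V} (hE : ∀ e ∈ E, e.2 = y)
    (w : Walk G a b) (hy : y ∉ w.support) :
    ∃ w' : Walk (G.deleteDir E) a b, w'.darts = w.darts := by
  induction w with
  | nil v => exact ⟨nil v, rfl⟩
  | @cons a b c k h w ih =>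
    simp only [support_cons, List.mem_cons, not_or] at hy
    obtain ⟨w', hw'⟩ := ih hy.2
    have hstep : (G.deleteDir E).stepOK a b k := by
      cases k with
      | fwd => exact ⟨h, fun he => hy.2 (hE _ he ▸ start_mem_support w)⟩
      | bwd => exact ⟨h, fun he => hy.1 (hE _ he).symm⟩
      | bi => exact h
    exact ⟨cons k hstep w', by simp [hw']⟩

end HalfTrek

section DescendantsRemoved

variable {W : Set V} {z y : V}

lemma not_isColl_iff {κ k : EKind} : ¬ isColl κ k ↔ κ = .bwd ∨ k = .fwd := by
  cases κ <;> cases k <;> decide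

/-- Leaving a descendant of `z` through an arrowhead, a walk towards a non-descendant `y`
must turn at a collider, which is itself a descendant of `z`. -/
lemma not_unblockedFrom_fwd_of_desc (hW : ∀ d ∈ W, ¬ G.desc z d) (hy : ¬ G.desc z y) {a : V}
    (s : Walk G a y) (ha : G.desc z a) : ¬ s.UnblockedFrom W .fwd := by
  induction s with
  | nil => exact fun _ => hy ha
  | cons k h s ih =>
    rw [unblockedFrom_cons]
    rintro ⟨hcoll, hs⟩
    cases k with
    | fwd => exact ih hy (ha.tail h) hs
    | bwd | bi =>
      obtain ⟨d, hd, had⟩ : ∃ d ∈ W, G.desc _ d := by simpa [isColl] using hcoll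
      exact hW d hd (ha.trans had)

/-- Invariant: a vertex entered against a directed edge is not a descendant of `z`, since
the chain of such edges leads back either to `z` (a cycle) or to a collider. -/
lemma UnblockedFrom.of_diff_desc (hy : ¬ G.desc z y) {a : V} {κ : EKind} {s : Walk G a y}
    (hs : s.UnblockedFrom (W \ {v | G.desc z v}) κ) (hκ : κ = .bwd → ¬ G.desc z a) :
    s.UnblockedFrom W κ := by
  induction s generalizing κ with
  | nil => trivial
  | @cons a b _ k h s ih =>
    rw [unblockedFrom_cons] at hs ⊢
    obtain ⟨hcoll, hs⟩ := hs
    refine ⟨?_, ih hy hs fun hk hzb => ?_⟩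
    · by_cases hc : isColl κ k
      · simp only [hc, if_true] at hcoll ⊢
        obtain ⟨d, hd, had⟩ := hcoll
        exact ⟨d, hd.1, had⟩
      · simp only [hc] at hcoll ⊢
        intro haW
        have hza : G.desc z a := by_contra fun hza => hcoll ⟨haW, hza⟩
        rcases not_isColl_iff.1 hc with rfl | rfl
        · exact hκ rfl hza
        · exact not_unblockedFrom_fwd_of_desc (fun d hd => hd.2) hy s (hza.tail h) hs
    · subst hk
      have hza : G.desc z a := hzb.tail h
      by_cases hc : isColl κ .bwd
      · simp only [hc, if_true] at hcoll
        obtain ⟨d, hd, had⟩ := hcoll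
        exact hd.2 (hza.trans had)
      · rcases not_isColl_iff.1 hc with rfl | h'
        · exact hκ rfl hza
        · exact nomatch h'

end DescendantsRemoved

end Walk

namespace MixedGraph

open Walk

variable {V : Type} {G : MixedGraph V} {W₁ W₂ : Set V} {z₁ z₂ y : V}

section

variable {a b : V} {W : Set V}

lemma dsep.ne (h : G.dsep a b W) : a ≠ b := by
  rintro rfl
  exact h (.nil a) (List.nodup_singleton a) trivial

lemma dsep.not_unblocked (h : G.dsep a b W) (w : Walk G a b) : ¬ w.Unblocked W := fun hw =>
  let ⟨w', hp, hu⟩ := hw.exists_isPath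
  h w' hp hu

end

lemma dsep.diff_desc (h : G.dsep z₂ y W₂) (hy : ¬ G.desc z₂ y) :
    G.dsep z₂ y (W₂ \ {v | G.desc z₂ v}) := by
  intro s hs hsu
  cases s with
  | nil => exact h.ne rfl
  | cons k hk s =>
    refine h _ hs (UnblockedFrom.of_diff_desc hy hsu fun hkb hzb => ?_)
    subst hkb
    exact G.acyclic z₂ (.tail' hzb hk)

/-- The separator for the new source `z₂`: either `W₁` itself, or `W₂` without the
descendants of `z₂`. -/
lemma dsep.exists_sep_of_isHalfTrek (h₁ : G.dsep z₁ y W₁) (h₂ : G.dsep z₂ y W₂)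
    {R : Walk G z₁ z₂} (hR : R.IsHalfTrek) (hRu : R.Unblocked W₁) (hz₂ : z₂ ∉ W₁) :
    ∃ W ⊆ W₁ ∪ W₂, G.dsep z₂ y W ∧ ∀ v ∈ W, G.desc z₂ v → v ∈ W₁ := by
  by_cases hd : G.dsep z₂ y W₁
  · exact ⟨W₁, Set.subset_union_left, hd, fun v hv _ => hv⟩
  have hblk : ∀ q : Walk G z₂ y, ¬ q.UnblockedFrom W₁ .fwd := fun q hq =>
    h₁.not_unblocked _ (hRu.append_of_isHalfTrek hR hq)
  -- a descendant of `z₂` in `W₁` would open `z₂` as a collider between `R` and a path to `y`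
  have hW₁ : ∀ d ∈ W₁, ¬ G.desc z₂ d := by
    simp only [dsep, not_forall, not_not] at hd
    obtain ⟨q, -, hq⟩ := hd
    intro d hd hzd
    cases q with
    | nil => exact h₂.ne rfl
    | cons k h q =>
      refine hblk _ ((unblockedFrom_cons _ _ h q).2 ⟨?_, hq⟩)
      split
      exacts [⟨d, hd, hzd⟩, hz₂]
  have hy : ¬ G.desc z₂ y := fun hzy => by
    obtain ⟨C, hC⟩ := exists_isDirected_of_desc hzy
    refine hblk C ((hC.unblockedFrom_iff _).2 fun d hd hdW => hW₁ _ hdW ?_)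
    exact hC.desc_of_mem (fst_mem_support_of_mem_darts hd)
  exact ⟨W₂ \ {v | G.desc z₂ v}, fun v hv => Or.inr hv.1, h₂.diff_desc hy,
    fun v hv hzv => absurd hzv hv.2⟩

end MixedGraph

open Walk in
lemma exists_dsep_unblocking_suffix {V : Type} {G : MixedGraph V} {E : Set (V × V)}
    {x y z₁ z₂ : V} {W₁ W₂ : Set V} (hE : ∀ e ∈ E, e.2 = y) (hxy : G.dir x y)
    {R : Walk G z₁ z₂} {A : Walk G z₂ x} (hne : z₁ ≠ z₂) (hht : (R.append A).IsHalfTrek)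
    (hu : (R.append A).Unblocked W₁) (h₁ : (G.deleteDir E).dsep z₁ y W₁)
    (h₂ : (G.deleteDir E).dsep z₂ y W₂) :
    ∃ W ⊆ W₁ ∪ W₂, (G.deleteDir E).dsep z₂ y W ∧ A.Unblocked W := by
  have hy : y ∉ (R.append A).support := hht.not_mem_support hxy h₁.ne
  have hA : A.IsDirected := hht.isDirected_of_append hne
  have hAW₁ : ∀ d ∈ A.darts, d.1 ∉ W₁ := fun d hd => hht.unblocked_iff.1 hu d <| by
    rw [darts_tail_append A hne]
    exact List.mem_append_right _ hd
  cases A with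
  | nil => exact ⟨W₂, Set.subset_union_right, h₂, trivial⟩
  | cons k h A =>
    have hRht : R.IsHalfTrek := hht.of_append_left
    obtain ⟨R', hR'⟩ := exists_deleteDir_darts_eq hE R fun hyR =>
      hy (mem_support_append.2 (.inl hyR))
    obtain ⟨A', hA'⟩ := exists_deleteDir_darts_eq hE (cons k h A) fun hyA =>
      hy (mem_support_append.2 (.inr hyA))
    have hR'ht : R'.IsHalfTrek := hRht.of_darts_eq hR'
    have hR'u : R'.Unblocked W₁ :=
      hR'ht.unblocked_iff.2 (hR' ▸ hRht.unblocked_iff.1 hu.of_append_left)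
    obtain ⟨W, hsub, hsep, hW⟩ :=
      h₁.exists_sep_of_isHalfTrek h₂ hR'ht hR'u (hAW₁ _ (List.mem_cons_self ..))
    refine ⟨W, hsub, hsep, hA.isHalfTrek.unblocked_iff.2 fun d hd hdW => ?_⟩
    have hd : d ∈ A'.darts := hA' ▸ List.mem_of_mem_tail hd
    refine hAW₁ d (hA' ▸ hd) (hW _ hdW ?_)
    exact IsDirected.desc_of_mem (fun e he => hA e (hA' ▸ he)) (fst_mem_support_of_mem_darts hd)

/-- One entry `(z_i, W_i, p_i)` of a GIS-witness, for a target `t = x_i`. -/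
structure GISTriple {V : Type} (G : MixedGraph V) (t : V) where
  z : V
  W : Set V
  p : Walk G z t

namespace GISTriple

variable {V : Type} {G : MixedGraph V} {E : Set (V × V)} {y t : V}

def IsValid (E : Set (V × V)) (y : V) (T : GISTriple G t) : Prop :=
  (∀ w ∈ T.W, ¬ G.desc y w) ∧ (G.deleteDir E).dsep T.z y T.W ∧ T.p.IsPath ∧
    T.p.Unblocked T.W ∧ T.p.IsHalfTrek

lemma IsValid.exists_suffix (hE : ∀ e ∈ E, e.2 = y) (hty : G.dir t y) {T : GISTriple G t}
    (hT : T.IsValid E y) {t' : V} {T' : GISTriple G t'} (hT' : T'.IsValid E y)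
    (hne : T.z ≠ T'.z) (hmem : T'.z ∈ T.p.support) :
    ∃ S : GISTriple G t, S.z = T'.z ∧ S.IsValid E y ∧ S.p.Right ⊆ T.p.Right ∧
      S.p.darts.length < T.p.darts.length := by
  obtain ⟨z, W, p⟩ := T
  obtain ⟨hWy, h₁, hpath, hu, hht⟩ := hT
  dsimp only at *
  obtain ⟨R, A, rfl⟩ := Walk.exists_eq_append_of_mem_support hmem
  obtain ⟨W', hsub, hsep, hA⟩ := exists_dsep_unblocking_suffix hE hty hne hht hu h₁ hT'.2.1
  refine ⟨⟨T'.z, W', A⟩, rfl, ⟨fun w hw => (hsub hw).elim (hWy w) (hT'.1 w), hsep,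
    hpath.of_append_right, hA, (hht.isDirected_of_append hne).isHalfTrek⟩,
    Walk.Right_subset_Right_append R A, ?_⟩
  cases R with
  | nil => exact absurd rfl hne
  | cons => simp

end GISTriple

lemma Function.forall_update_update {ι : Type*} [DecidableEq ι] {β : ι → Sort*}
    (f : ∀ l, β l) {i j : ι} {a : β i} {b : β j} (P : ∀ l, β l → Prop)
    (ha : P i a) (hb : P j b) (hf : ∀ l, l ≠ i → l ≠ j → P l (f l)) :
    ∀ l, P l (Function.update (Function.update f i a) j b l) :=
  (Function.forall_update_iff _ P).2
    ⟨hb, (Function.forall_update_iff f fun l v => l ≠ j → P l v).2 ⟨fun _ => ha, hf⟩⟩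

section Family

variable {V : Type} {G : MixedGraph V} {k : ℕ} {x : Fin k → V} {y : V}

/-- For half-treks `Left(p) = {z}`, so disjoint `Left` sets amount to distinct sources. -/
def IsHalfTrekWitness (x : Fin k → V) (y : V) (T : ∀ l, GISTriple G (x l)) : Prop :=
  (∀ l, (T l).IsValid {e | ∃ j, e = (x j, y)} y) ∧ Function.Injective (fun l => (T l).z) ∧
    Pairwise fun l m => Disjoint (T l).p.Right (T m).p.Right

lemma gisWitness_and_isHalfTrek_iff {T : ∀ l, GISTriple G (x l)} :
    (GISWitness G x y (fun l => (T l).z) (fun l => (T l).W) (fun l => (T l).p) ∧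
      ∀ l, (T l).p.IsHalfTrek) ↔ IsHalfTrekWitness x y T := by
  constructor
  · rintro ⟨⟨hsep, hpath, hside⟩, hht⟩
    refine ⟨fun l => ⟨(hsep l).1, (hsep l).2, (hpath l).1, (hpath l).2, hht l⟩,
      fun l m hz => by_contra fun hlm => ?_,
      fun l m hlm => Set.disjoint_iff_inter_eq_empty.2 (hside l m hlm).2⟩
    have := (hside l m hlm).1
    rw [(hht l).Left_eq, (hht m).Left_eq, Set.singleton_inter_eq_empty] at this
    exact this hz
  · rintro ⟨hT, hinj, hdisj⟩
    refine ⟨⟨fun l => ⟨(hT l).1, (hT l).2.1⟩, fun l => ⟨(hT l).2.2.1, (hT l).2.2.2.1⟩,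
      fun l m hlm => ⟨?_, Set.disjoint_iff_inter_eq_empty.1 (hdisj hlm)⟩⟩,
      fun l => (hT l).2.2.2.2⟩
    rw [(hT l).2.2.2.2.Left_eq, (hT m).2.2.2.2.Left_eq, Set.singleton_inter_eq_empty]
    exact hinj.ne hlm

lemma IsHalfTrekWitness.exists_sum_length_lt (hE : ∀ l, G.dir (x l) y)
    {T : ∀ l, GISTriple G (x l)} (hT : IsHalfTrekWitness x y T) {i j : Fin k} (hij : i ≠ j)
    (hj : (T j).z ∈ (T i).p.support) (hi : (T i).z ∈ (T j).p.support) :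
    ∃ T' : ∀ l, GISTriple G (x l), IsHalfTrekWitness x y T' ∧
      ∑ l, (T' l).p.darts.length < ∑ l, (T l).p.darts.length := by
  obtain ⟨hvalid, hinj, hdisj⟩ := hT
  have hEy : ∀ e ∈ {e | ∃ m, e = (x m, y)}, e.2 = y := by rintro _ ⟨m, rfl⟩; rfl
  obtain ⟨Si, hSi_z, hSi, hSi_R, hSi_len⟩ :=
    (hvalid i).exists_suffix hEy (hE i) (hvalid j) (hinj.ne hij) hj
  obtain ⟨Sj, hSj_z, hSj, hSj_R, hSj_len⟩ :=
    (hvalid j).exists_suffix hEy (hE j) (hvalid i) (hinj.ne hij.symm) hi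
  set T' := Function.update (Function.update T i Si) j Sj
  have hT'i : T' i = Si := by simp [T', Function.update_of_ne hij]
  have hz : ∀ l, (T' l).z = (T (Equiv.swap i j l)).z :=
    Function.forall_update_update T (fun l S => S.z = (T (Equiv.swap i j l)).z)
      (by rwa [Equiv.swap_apply_left]) (by rwa [Equiv.swap_apply_right])
      fun l hli hlj => by rw [Equiv.swap_apply_of_ne_of_ne hli hlj]
  have hR : ∀ l, (T' l).p.Right ⊆ (T l).p.Right :=
    Function.forall_update_update T (fun l S => S.p.Right ⊆ (T l).p.Right) hSi_R hSj_R
      fun _ _ _ => le_rfl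
  have hlen : ∀ l, (T' l).p.darts.length ≤ (T l).p.darts.length :=
    Function.forall_update_update T (fun l S => S.p.darts.length ≤ (T l).p.darts.length)
      hSi_len.le hSj_len.le fun _ _ _ => le_rfl
  refine ⟨T', ⟨Function.forall_update_update T _ hSi hSj fun l _ _ => hvalid l, ?_,
    fun l m hlm => (hdisj hlm).mono (hR l) (hR m)⟩, ?_⟩
  · rw [show (fun l => (T' l).z) = (fun l => (T l).z) ∘ Equiv.swap i j from funext hz]
    exact hinj.comp (Equiv.injective _)
  · exact Finset.sum_lt_sum (fun l _ => hlen l) ⟨i, Finset.mem_univ i, hT'i ▸ hSi_len⟩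

lemma IsHalfTrekWitness.exists_mutualFree (hE : ∀ l, G.dir (x l) y)
    {T : ∀ l, GISTriple G (x l)} (hT : IsHalfTrekWitness x y T) :
    ∃ T' : ∀ l, GISTriple G (x l), IsHalfTrekWitness x y T' ∧
      ∀ i j, i ≠ j → (T' j).z ∈ (T' i).p.support → (T' i).z ∉ (T' j).p.support := by
  induction hn : ∑ l, (T l).p.darts.length using Nat.strong_induction_on generalizing T with
  | _ n ih =>
    by_cases hfree :
        ∀ i j, i ≠ j → (T j).z ∈ (T i).p.support → (T i).z ∉ (T j).p.support
    · exact ⟨T, hT, hfree⟩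
    simp only [not_forall, not_not] at hfree
    obtain ⟨i, j, hij, hj, hi⟩ := hfree
    obtain ⟨T', hT', hlt⟩ := hT.exists_sum_length_lt hE hij hj hi
    exact ih _ (hn ▸ hlt) hT' rfl

end Family

/-- **Mutual-intersection removal.** There exists a GIS-witness with all paths half-treks iff
there exists one additionally satisfying: for all `i ≠ j`, if `z_j` lies on `p_i` then `z_i`
does not lie on `p_j`. -/
theorem gis_mutual_intersection_removal {V : Type} (G : MixedGraph V)
    (k : ℕ) (x : Fin k → V) (y : V) (hE : ∀ i, G.dir (x i) y) :
    (∃ (z : Fin k → V) (Wc : Fin k → Set V) (p : ∀ i, Walk G (z i) (x i)),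
      GISWitness G x y z Wc p ∧ ∀ i, (p i).IsHalfTrek) ↔
    (∃ (z : Fin k → V) (Wc : Fin k → Set V) (p : ∀ i, Walk G (z i) (x i)),
      GISWitness G x y z Wc p ∧ (∀ i, (p i).IsHalfTrek) ∧
      (∀ i j, i ≠ j → z j ∈ (p i).support → z i ∉ (p j).support)) := by
  constructor
  · rintro ⟨z, Wc, p, hgis⟩
    have hT := (gisWitness_and_isHalfTrek_iff (T := fun l => ⟨z l, Wc l, p l⟩)).1 hgis
    obtain ⟨T, hT, hfree⟩ := hT.exists_mutualFree hE
    obtain ⟨hgis', hht'⟩ := gisWitness_and_isHalfTrek_iff.2 hT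
    exact ⟨_, _, _, hgis', hht', hfree⟩
  · rintro ⟨z, Wc, p, hgis, hht, -⟩
    exact ⟨z, Wc, p, hgis, hht⟩

end SEMPaper
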